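/- Let H, L(λ,μ) and L₋ be the Hamiltonian and Lax matrices of the periodic three-particle Toda lattice, let b ∈ ℝ, and assume a_1 ≠ 0. Define the transformed Hamiltonian H̃ = e^{q_2−q_1}(H + b), the transformed Lax matrices L̃ = L − (H̃/a_1)E_{21} and L̃₋ = e^{q_2−q_1}·L₋. Then the transformed Lax equation {H̃, L̃} = [L̃, L̃₋] holds entrywise at every point of ℝ³ × ℝ³, for all λ ∈ ℝ and all μ ≠ 0. -/

import Mathlib

open Real Matrix

/-- The canonical Poisson bracket on the phase space `(Fin 3 → ℝ) × (Fin 3 → ℝ)`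
with coordinates `(p, q)`. -/
noncomputable def pbracket (f g : (Fin 3 → ℝ) × (Fin 3 → ℝ) → ℝ)
    (z : (Fin 3 → ℝ) × (Fin 3 → ℝ)) : ℝ :=
  ∑ i : Fin 3,
    (fderiv ℝ f z (Pi.single i 1, 0) * fderiv ℝ g z (0, Pi.single i 1)
      - fderiv ℝ f z (0, Pi.single i 1) * fderiv ℝ g z (Pi.single i 1, 0))

/-- The periodic three-particle Toda Hamiltonian. -/
noncomputable def todaH (a1 a2 a3 : ℝ) (z : (Fin 3 → ℝ) × (Fin 3 → ℝ)) : ℝ :=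
  (1 / 2) * ((z.1 0) ^ 2 + (z.1 1) ^ 2 + (z.1 2) ^ 2)
    + a1 * exp (z.2 0 - z.2 1) + a2 * exp (z.2 1 - z.2 2)
    + a3 * exp (z.2 2 - z.2 0)

/-- The Toda Lax matrix `L(λ,μ)`. -/
noncomputable def todaL (a1 a2 a3 lam mu : ℝ) (z : (Fin 3 → ℝ) × (Fin 3 → ℝ)) :
    Matrix (Fin 3) (Fin 3) ℝ :=
  !![lam - z.1 0, a1 * exp (z.2 0 - z.2 1), mu⁻¹;
     1, lam - z.1 1, a2 * exp (z.2 1 - z.2 2);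
     mu * a3 * exp (z.2 2 - z.2 0), 1, lam - z.1 2]

/-- The second Toda Lax matrix `L₋`. -/
noncomputable def todaLminus (a1 a2 a3 mu : ℝ) (z : (Fin 3 → ℝ) × (Fin 3 → ℝ)) :
    Matrix (Fin 3) (Fin 3) ℝ :=
  -(Matrix.single 0 1 (a1 * exp (z.2 0 - z.2 1))
    + Matrix.single 1 2 (a2 * exp (z.2 1 - z.2 2))
    + Matrix.single 2 0 (mu * a3 * exp (z.2 2 - z.2 0)))

/-- The transformed Hamiltonian `H̃ = e^{q₂−q₁}(H + b)` obtained by the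
canonical change of time associated to the simple root `β = ε₁ − ε₂`. -/
noncomputable def todaHt (a1 a2 a3 b : ℝ) (z : (Fin 3 → ℝ) × (Fin 3 → ℝ)) : ℝ :=
  exp (z.2 1 - z.2 0) * (todaH a1 a2 a3 z + b)

/-- The transformed Lax matrix `L̃ = L − (H̃/a₁)E₂₁`. -/
noncomputable def todaLt (a1 a2 a3 b lam mu : ℝ) (z : (Fin 3 → ℝ) × (Fin 3 → ℝ)) :
    Matrix (Fin 3) (Fin 3) ℝ :=
  todaL a1 a2 a3 lam mu z
    - Matrix.single 1 0 (todaHt a1 a2 a3 b z / a1)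

/-- The transformed second Lax matrix `L̃₋ = e^{q₂−q₁}·L₋`. -/
noncomputable def todaLtminus (a1 a2 a3 mu : ℝ) (z : (Fin 3 → ℝ) × (Fin 3 → ℝ)) :
    Matrix (Fin 3) (Fin 3) ℝ :=
  exp (z.2 1 - z.2 0) • todaLminus a1 a2 a3 mu z

/-! Write `X_F = (-∂F/∂q, ∂F/∂p)` for the Hamiltonian vector field of `F`, so that
`{F, G} = dG(X_F)`; Lean indices are shifted by one, so `E₂₁` is `Matrix.single 1 0 1`.
By the Leibniz rule `X_{H̃} = e^{q₂−q₁} X_H + (H + b) X_{e^{q₂−q₁}}`. Along `X_H` the Lax matrix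
moves by the classical Lax equation `{H, L} = [L, L₋]`, and along `X_{e^{q₂−q₁}}`, which only
moves `p₁` and `p₂`, it moves by `e^{q₂−q₁}(E₂₂ − E₁₁)`. The correction `−(H̃/a₁)E₂₁` in `L̃` is
invisible on the left because `{H̃, H̃} = 0`, while on the right it contributes
`−e^{q₂−q₁}(H̃/a₁)[E₂₁, L₋] = H̃(E₂₂ − E₁₁)`, since `[E₂₁, L₋] = a₁e^{q₁−q₂}(E₁₁ − E₂₂)`. -/

abbrev PhaseSpace := (Fin 3 → ℝ) × (Fin 3 → ℝ)

noncomputable def hamiltonianVectorField (f : PhaseSpace → ℝ) (z : PhaseSpace) : PhaseSpace :=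
  (fun i => -fderiv ℝ f z (0, Pi.single i 1), fun i => fderiv ℝ f z (Pi.single i 1, 0))

theorem pbracket_eq_fderiv_hamiltonianVectorField (f g : PhaseSpace → ℝ) (z : PhaseSpace) :
    pbracket f g z = fderiv ℝ g z (hamiltonianVectorField f z) := by
  set X := hamiltonianVectorField f z
  have hX : X = ∑ i : Fin 3,
      (X.1 i • ((Pi.single i 1 : Fin 3 → ℝ), 0) + X.2 i • (0, (Pi.single i 1 : Fin 3 → ℝ))) := by
    ext j <;> simp [Prod.fst_sum, Prod.snd_sum, Finset.sum_apply, Pi.single_apply]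
  rw [hX, map_sum, pbracket]
  refine Finset.sum_congr rfl fun i _ => ?_
  simp only [X, hamiltonianVectorField, map_add, map_smul, smul_eq_mul]
  ring

theorem pbracket_self (f : PhaseSpace → ℝ) (z : PhaseSpace) : pbracket f f z = 0 := by
  simp [pbracket, mul_comm]

theorem hamiltonianVectorField_mul {f g : PhaseSpace → ℝ} {z : PhaseSpace}
    (hf : DifferentiableAt ℝ f z) (hg : DifferentiableAt ℝ g z) :
    hamiltonianVectorField (fun w => f w * g w) z
      = f z • hamiltonianVectorField g z + g z • hamiltonianVectorField f z := by
  ext i <;> simp only [hamiltonianVectorField, fderiv_fun_mul hf hg, Prod.fst_add, Prod.snd_add,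
    Prod.smul_fst, Prod.smul_snd, Pi.add_apply, Pi.smul_apply, _root_.add_apply, _root_.smul_apply,
    smul_eq_mul]
  ring

theorem pbracket_mul_left {f g : PhaseSpace → ℝ} {z : PhaseSpace} (hf : DifferentiableAt ℝ f z)
    (hg : DifferentiableAt ℝ g z) (h : PhaseSpace → ℝ) :
    pbracket (fun w => f w * g w) h z = f z * pbracket g h z + g z * pbracket f h z := by
  simp only [pbracket_eq_fderiv_hamiltonianVectorField, hamiltonianVectorField_mul hf hg, map_add,
    map_smul, smul_eq_mul]

theorem pbracket_add_const_left (f g : PhaseSpace → ℝ) (c : ℝ) (z : PhaseSpace) :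
    pbracket (fun w => f w + c) g z = pbracket f g z := by
  simp only [pbracket, fderiv_add_const]

theorem pbracket_sub_mul_self {f g : PhaseSpace → ℝ} {z : PhaseSpace}
    (hf : DifferentiableAt ℝ f z) (hg : DifferentiableAt ℝ g z) (c : ℝ) :
    pbracket f (fun w => g w - c * f w) z = pbracket f g z := by
  rw [pbracket_eq_fderiv_hamiltonianVectorField, fderiv_fun_sub hg (hf.const_mul c),
    fderiv_const_mul hf]
  simp [← pbracket_eq_fderiv_hamiltonianVectorField, pbracket_self]

theorem fderiv_fst_apply (i : Fin 3) (z u : PhaseSpace) :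
    fderiv ℝ (fun w : PhaseSpace => w.1 i) z u = u.1 i :=
  congrArg (· u) ((ContinuousLinearMap.proj i).comp (ContinuousLinearMap.fst ℝ _ _)).fderiv

theorem fderiv_snd_apply (i : Fin 3) (z u : PhaseSpace) :
    fderiv ℝ (fun w : PhaseSpace => w.2 i) z u = u.2 i :=
  congrArg (· u) ((ContinuousLinearMap.proj i).comp (ContinuousLinearMap.snd ℝ _ _)).fderiv

theorem fderiv_exp_sub_apply (j k : Fin 3) (z u : PhaseSpace) :
    fderiv ℝ (fun w : PhaseSpace => exp (w.2 j - w.2 k)) z u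
      = exp (z.2 j - z.2 k) * (u.2 j - u.2 k) := by
  rw [fderiv_exp (by fun_prop)]
  simp (disch := fun_prop) [fderiv_fun_sub, fderiv_snd_apply]

theorem hamiltonianVectorField_exp_sub (j k : Fin 3) (z : PhaseSpace) :
    hamiltonianVectorField (fun w => exp (w.2 j - w.2 k)) z
      = (exp (z.2 j - z.2 k) • (Pi.single k 1 - Pi.single j 1), 0) := by
  ext i
  · simp only [hamiltonianVectorField, fderiv_exp_sub_apply, Pi.smul_apply, Pi.sub_apply,
      smul_eq_mul, Pi.single_comm i]
    ring
  · simp [hamiltonianVectorField, fderiv_exp_sub_apply]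

theorem differentiable_todaH (a1 a2 a3 : ℝ) : Differentiable ℝ (todaH a1 a2 a3) := by
  unfold todaH
  fun_prop

theorem differentiable_todaHt (a1 a2 a3 b : ℝ) : Differentiable ℝ (todaHt a1 a2 a3 b) := by
  unfold todaHt
  have := differentiable_todaH a1 a2 a3
  fun_prop

theorem differentiable_todaL_apply (a1 a2 a3 lam mu : ℝ) (i j : Fin 3) :
    Differentiable ℝ (fun w => todaL a1 a2 a3 lam mu w i j) := by
  fin_cases i <;> fin_cases j <;> simp only [todaL] <;> simp <;> fun_prop

theorem fderiv_todaH_apply (a1 a2 a3 : ℝ) (z u : PhaseSpace) :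
    fderiv ℝ (todaH a1 a2 a3) z u
      = z.1 0 * u.1 0 + z.1 1 * u.1 1 + z.1 2 * u.1 2
        + a1 * exp (z.2 0 - z.2 1) * (u.2 0 - u.2 1)
        + a2 * exp (z.2 1 - z.2 2) * (u.2 1 - u.2 2)
        + a3 * exp (z.2 2 - z.2 0) * (u.2 2 - u.2 0) := by
  unfold todaH
  simp (disch := fun_prop) [fderiv_fun_add, fderiv_const_mul, fderiv_fun_pow, fderiv_fun_sub,
    fderiv_fst_apply, fderiv_snd_apply]
  ring

theorem fderiv_todaL_apply (a1 a2 a3 lam mu : ℝ) (z u : PhaseSpace) (i j : Fin 3) :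
    fderiv ℝ (fun w => todaL a1 a2 a3 lam mu w i j) z u
      = !![-u.1 0, a1 * exp (z.2 0 - z.2 1) * (u.2 0 - u.2 1), 0;
           0, -u.1 1, a2 * exp (z.2 1 - z.2 2) * (u.2 1 - u.2 2);
           mu * a3 * exp (z.2 2 - z.2 0) * (u.2 2 - u.2 0), 0, -u.1 2] i j := by
  fin_cases i <;> fin_cases j <;>
    simp (disch := fun_prop) [todaL, fderiv_const_sub, fderiv_const_mul, fderiv_fun_sub,
      fderiv_fst_apply, fderiv_snd_apply] <;> ring

theorem hamiltonianVectorField_todaH (a1 a2 a3 : ℝ) (z : PhaseSpace) :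
    hamiltonianVectorField (todaH a1 a2 a3) z =
      (![a3 * exp (z.2 2 - z.2 0) - a1 * exp (z.2 0 - z.2 1),
         a1 * exp (z.2 0 - z.2 1) - a2 * exp (z.2 1 - z.2 2),
         a2 * exp (z.2 1 - z.2 2) - a3 * exp (z.2 2 - z.2 0)], z.1) := by
  ext i <;> fin_cases i <;> simp [hamiltonianVectorField, fderiv_todaH_apply] <;> ring

theorem pbracket_todaH_todaL (a1 a2 a3 lam : ℝ) {mu : ℝ} (hmu : mu ≠ 0) (z : PhaseSpace)
    (i j : Fin 3) :
    pbracket (todaH a1 a2 a3) (fun w => todaL a1 a2 a3 lam mu w i j) z =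
      (todaL a1 a2 a3 lam mu z * todaLminus a1 a2 a3 mu z
        - todaLminus a1 a2 a3 mu z * todaL a1 a2 a3 lam mu z) i j := by
  rw [pbracket_eq_fderiv_hamiltonianVectorField, fderiv_todaL_apply, hamiltonianVectorField_todaH]
  simp only [Matrix.sub_apply, Matrix.mul_apply, Fin.sum_univ_three]
  fin_cases i <;> fin_cases j <;> simp [todaL, todaLminus] <;> field_simp <;> ring

theorem pbracket_exp_todaL (a1 a2 a3 lam mu : ℝ) (z : PhaseSpace) (i j : Fin 3) :
    pbracket (fun w => exp (w.2 1 - w.2 0)) (fun w => todaL a1 a2 a3 lam mu w i j) z =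
      exp (z.2 1 - z.2 0)
        * (Matrix.single 1 1 1 - Matrix.single 0 0 1 : Matrix (Fin 3) (Fin 3) ℝ) i j := by
  rw [pbracket_eq_fderiv_hamiltonianVectorField, fderiv_todaL_apply,
    hamiltonianVectorField_exp_sub]
  fin_cases i <;> fin_cases j <;> simp

theorem pbracket_todaHt_todaL (a1 a2 a3 b lam : ℝ) {mu : ℝ} (hmu : mu ≠ 0) (z : PhaseSpace)
    (i j : Fin 3) :
    pbracket (todaHt a1 a2 a3 b) (fun w => todaL a1 a2 a3 lam mu w i j) z =
      exp (z.2 1 - z.2 0) * (todaL a1 a2 a3 lam mu z * todaLminus a1 a2 a3 mu z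
          - todaLminus a1 a2 a3 mu z * todaL a1 a2 a3 lam mu z) i j
        + todaHt a1 a2 a3 b z
          * (Matrix.single 1 1 1 - Matrix.single 0 0 1 : Matrix (Fin 3) (Fin 3) ℝ) i j := by
  have hHt : todaHt a1 a2 a3 b = fun w => exp (w.2 1 - w.2 0) * (todaH a1 a2 a3 w + b) := rfl
  rw [hHt, pbracket_mul_left (by fun_prop) ((differentiable_todaH a1 a2 a3).add_const b z),
    pbracket_add_const_left, pbracket_todaH_todaL _ _ _ _ hmu, pbracket_exp_todaL]
  ring

theorem todaLt_apply_eq_sub (a1 a2 a3 b lam mu : ℝ) (i j : Fin 3) :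
    (fun w => todaLt a1 a2 a3 b lam mu w i j)
      = fun w => todaL a1 a2 a3 lam mu w i j
          - Matrix.single 1 0 a1⁻¹ i j * todaHt a1 a2 a3 b w := by
  funext w
  simp only [todaLt, Matrix.sub_apply, Matrix.single_apply]
  split_ifs <;> ring

theorem single_commutator_todaLminus (a1 a2 a3 mu : ℝ) (z : PhaseSpace) :
    Matrix.single 1 0 1 * todaLminus a1 a2 a3 mu z - todaLminus a1 a2 a3 mu z * Matrix.single 1 0 1
      = (a1 * exp (z.2 0 - z.2 1)) • (Matrix.single 0 0 1 - Matrix.single 1 1 1) := by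
  ext i j
  simp only [Matrix.sub_apply, Matrix.mul_apply, Fin.sum_univ_three]
  fin_cases i <;> fin_cases j <;> simp [todaLminus]

theorem todaLt_commutator (a1 a2 a3 b lam mu : ℝ) (ha1 : a1 ≠ 0) (z : PhaseSpace) :
    todaLt a1 a2 a3 b lam mu z * todaLtminus a1 a2 a3 mu z
        - todaLtminus a1 a2 a3 mu z * todaLt a1 a2 a3 b lam mu z
      = exp (z.2 1 - z.2 0) • (todaL a1 a2 a3 lam mu z * todaLminus a1 a2 a3 mu z
          - todaLminus a1 a2 a3 mu z * todaL a1 a2 a3 lam mu z)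
        + todaHt a1 a2 a3 b z • (Matrix.single 1 1 1 - Matrix.single 0 0 1) := by
  set L := todaL a1 a2 a3 lam mu z
  set M := todaLminus a1 a2 a3 mu z
  set f := exp (z.2 1 - z.2 0)
  set H := todaHt a1 a2 a3 b z
  have hLt : todaLt a1 a2 a3 b lam mu z = L - (H / a1) • Matrix.single 1 0 1 := by
    rw [todaLt, Matrix.smul_single, smul_eq_mul, mul_one]
  have hcoef : f * (H / a1) * (a1 * exp (z.2 0 - z.2 1)) = H := by
    have hexp : f * exp (z.2 0 - z.2 1) = 1 := by rw [← Real.exp_add]; simp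
    field_simp
    linear_combination H * hexp
  calc _ = f • (L * M - M * L)
        - (f * (H / a1)) • (Matrix.single 1 0 1 * M - M * Matrix.single 1 0 1) := by
          rw [hLt, show todaLtminus a1 a2 a3 mu z = f • M from rfl]
          simp only [sub_mul, mul_sub, smul_mul_assoc, mul_smul_comm]
          module
    _ = _ := by
          rw [single_commutator_todaLminus, smul_smul, hcoef]
          module

/-- the transformed Lax equation `{H̃, L̃} = [L̃, L̃₋]` holds
entrywise at every point of phase space, for all `λ` and all `μ ≠ 0`. -/
theorem stmt_12 (a1 a2 a3 b lam mu : ℝ) (ha1 : a1 ≠ 0) (hmu : mu ≠ 0)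
    (z : (Fin 3 → ℝ) × (Fin 3 → ℝ)) (i j : Fin 3) :
    pbracket (todaHt a1 a2 a3 b) (fun w => todaLt a1 a2 a3 b lam mu w i j) z =
      (todaLt a1 a2 a3 b lam mu z * todaLtminus a1 a2 a3 mu z
        - todaLtminus a1 a2 a3 mu z * todaLt a1 a2 a3 b lam mu z) i j := by
  rw [todaLt_apply_eq_sub, pbracket_sub_mul_self (differentiable_todaHt a1 a2 a3 b z)
      (differentiable_todaL_apply a1 a2 a3 lam mu i j z), pbracket_todaHt_todaL _ _ _ _ _ hmu,
    todaLt_commutator _ _ _ _ _ _ ha1]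
  simp
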